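/- arXiv:1601.02719 — 2 statements merged into one kernel-verified Lean document; each statement's English description precedes it below -/
import Mathlib

section
/- Let f : ℝ → ℝ be differentiable on [a,b] with a < b, and suppose y lies strictly between f'(a) and the difference quotient (f(b) - f(a))/(b - a). Then there exists x ∈ (a,b) with f'(x) = y. -/
/-!
The difference quotient `t ↦ (f t - f a) / (t - a)`, extended by `f' a` at `t = a`, is continuous
on `[a, b]`, so by the intermediate value theorem it takes the value `y` at some `t ∈ (a, b)`.
The mean value theorem on `[a, t]` then produces `x ∈ (a, t)` with `f' x = y`.
-/

open Set Function

section IntermediateValue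

variable {α δ : Type*} [ConditionallyCompleteLinearOrder α] [TopologicalSpace α] [OrderTopology α]
  [DenselyOrdered α] [LinearOrder δ] [TopologicalSpace δ] [OrderClosedTopology δ]

theorem intermediate_value_uIoo {a b : α} (hab : a ≤ b) {f : α → δ}
    (hf : ContinuousOn f (Icc a b)) : uIoo (f a) (f b) ⊆ f '' Ioo a b := by
  rcases le_total (f a) (f b) with h | h
  · simpa [uIoo_of_le h] using intermediate_value_Ioo hab hf
  · simpa [uIoo_of_ge h] using intermediate_value_Ioo' hab hf

end IntermediateValue

theorem HasDerivAt.continuousOn_update_slope {𝕜 F : Type*} [NontriviallyNormedField 𝕜]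
    [DecidableEq 𝕜] [NormedAddCommGroup F] [NormedSpace 𝕜 F] {f : 𝕜 → F} {f' : F} {a : 𝕜}
    {s : Set 𝕜} (hf : ContinuousOn f s) (h : HasDerivAt f f' a) :
    ContinuousOn (update (slope f a) a f') s := by
  intro x hx
  rcases eq_or_ne x a with rfl | hxa
  · exact (continuousAt_update_same.2 (hasDerivAt_iff_tendsto_slope.1 h)).continuousWithinAt
  · rw [continuousWithinAt_update_of_ne hxa]
    exact ((continuousWithinAt_id.sub continuousWithinAt_const).inv₀ (sub_ne_zero.2 hxa)).smul
      ((hf x hx).sub continuousWithinAt_const)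

theorem olsen_case1 (f f' : ℝ → ℝ) (a b y : ℝ) (hab : a < b)
    (hd : ∀ x ∈ Set.Icc a b, HasDerivAt f (f' x) x)
    (h1 : min (f' a) ((f b - f a) / (b - a)) < y)
    (h2 : y < max (f' a) ((f b - f a) / (b - a))) :
    ∃ x ∈ Set.Ioo a b, f' x = y := by
  have hfc : ContinuousOn f (Icc a b) := fun x hx => (hd x hx).continuousAt.continuousWithinAt
  set g := update (slope f a) a (f' a)
  have hg : ContinuousOn g (Icc a b) :=
    (hd a (left_mem_Icc.2 hab.le)).continuousOn_update_slope hfc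
  have hy : y ∈ uIoo (g a) (g b) := by
    simp only [g, update_self, update_of_ne hab.ne', slope_def_field]
    exact ⟨h1, h2⟩
  obtain ⟨t, ht, hgt⟩ := intermediate_value_uIoo hab.le hg hy
  simp only [g, update_of_ne ht.1.ne', slope_def_field] at hgt
  have hat : Icc a t ⊆ Icc a b := Icc_subset_Icc_right ht.2.le
  obtain ⟨x, hx, hfx⟩ := exists_hasDerivAt_eq_slope f f' ht.1 (hfc.mono hat)
    fun x hx => hd x (hat (Ioo_subset_Icc_self hx))
  exact ⟨x, ⟨hx.1, hx.2.trans ht.2⟩, hfx.trans hgt⟩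
end

section
/- Let f : ℝ → ℝ be differentiable on [a,b] with a < b, and suppose y lies strictly between the difference quotient (f(b) - f(a))/(b - a) and f'(b). Then there exists x ∈ (a,b) with f'(x) = y. -/
/-! The mean value theorem writes the difference quotient as `f' c` for some `c ∈ (a, b)`;
Darboux's theorem on `[c, b]` then produces a point where `f'` takes the value `y`. -/

open Set

theorem exists_hasDerivWithinAt_eq_of_mem_uIoo {f f' : ℝ → ℝ} {a b y : ℝ} (hab : a ≤ b)
    (hf : ∀ x ∈ Icc a b, HasDerivWithinAt f (f' x) (Icc a b) x) (hy : y ∈ uIoo (f' a) (f' b)) :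
    ∃ x ∈ Ioo a b, f' x = y := by
  obtain ⟨hlo, hhi⟩ := hy
  rcases le_total (f' a) (f' b) with h | h
  · rw [inf_eq_left.2 h] at hlo
    rw [sup_eq_right.2 h] at hhi
    exact exists_hasDerivWithinAt_eq_of_gt_of_lt hab hf hlo hhi
  · rw [inf_eq_right.2 h] at hlo
    rw [sup_eq_left.2 h] at hhi
    exact exists_hasDerivWithinAt_eq_of_lt_of_gt hab hf hhi hlo

theorem olsen_case2 (f f' : ℝ → ℝ) (a b y : ℝ) (hab : a < b)
    (hd : ∀ x ∈ Set.Icc a b, HasDerivAt f (f' x) x)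
    (h1 : min ((f b - f a) / (b - a)) (f' b) < y)
    (h2 : y < max ((f b - f a) / (b - a)) (f' b)) :
    ∃ x ∈ Set.Ioo a b, f' x = y := by
  obtain ⟨c, hc, hslope⟩ := exists_hasDerivAt_eq_slope f f' hab
    (fun x hx ↦ (hd x hx).continuousAt.continuousWithinAt)
    (fun x hx ↦ hd x (Ioo_subset_Icc_self hx))
  have hcb : Icc c b ⊆ Icc a b := Icc_subset_Icc_left hc.1.le
  have hy : y ∈ uIoo (f' c) (f' b) := by
    rw [hslope]
    exact ⟨h1, h2⟩
  obtain ⟨x, hx, hfx⟩ := exists_hasDerivWithinAt_eq_of_mem_uIoo hc.2.le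
    (fun x hx ↦ (hd x (hcb hx)).hasDerivWithinAt) hy
  exact ⟨x, Ioo_subset_Ioo_left hc.1.le hx, hfx⟩
end
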